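/- Assume m ≥ 2, each μ_j is a nonatomic probability measure and (MAC) holds. Let (s_t)_{t≥0} be positive reals with s_t → 0 and Σ_t s_t = ∞, and let α^0 lie in the relative interior of Δ_{m−1}. Then there exist a sequence (s'_t) of positive reals with s'_t ≤ s_t for all t, s'_t → 0 and Σ_t s'_t = ∞, a sequence (α^t)_{t≥0} in the relative interior of Δ_{m−1} starting at α^0, and a sequence (u^t)_{t≥0} of vectors in ℝ^m, such that for every t: u^t is the partition value vector of some maxsum partition for α^t, and α^{t+1}_i = α^t_i − s'_t (u^t_i − ū^t) for every i (where ū^t := (1/m) Σ_{i=1}^m u^t_i), and moreover lim_{t→∞} min_{i ≤ t} g(α^i) = inf_{α ∈ Δ_{m−1}} g(α) = v, where v := sup over all m-partitions of min_j μ_j(A_j). -/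

import Mathlib

/-!
The partition value vector `u(α)` of a maxsum partition for `α` is a subgradient of the convex
function `g` on the simplex: `⟪β, u(α)⟫ ≤ g(β)` for all `β`, with equality at `β = α`. Hence the
step `α ↦ α - s (u - ū)` obeys the usual estimate
`|α_{t+1} - β|² ≤ |α_t - β|² - 2 s_t (g(α_t) - ⟪β, u_t⟫) + m s_t²`, and since
`∑ s_t² = o(∑ s_t)` the `s`-weighted average of `g(α_t) - ⟪β, u_t⟫` tends to `0` uniformly in
`β`. Taking `β` nearly optimal gives `min_{i ≤ t} g(α_i) → inf g`. Capping the steps at a small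
`δ` keeps the iterates in the relative interior: by (MAC), a coordinate below `2δ` receives a
below-average value, so it cannot decrease.

Taking `β` a vertex `e_k` shows that the `s`-weighted mixture of the vectors `u_t` has all
coordinates almost `≥ inf g`. Nonatomicity (Sierpiński's theorem, applied on cells where the
density ratios are nearly constant) realises such a mixture, up to any `ε`, by a single
partition; so `v ≥ inf g`, while `v ≤ inf g` is immediate.
-/

open MeasureTheory Filter Topology Function

namespace MeasureTheory

variable {X ι κ : Type*} [MeasurableSpace X]

structure IsMeasurablePartition (D : ι → Set X) (E : Set X) : Prop where
  measurableSet : ∀ i, MeasurableSet (D i)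
  pairwise_disjoint : Pairwise (Disjoint on D)
  iUnion_eq : ⋃ i, D i = E

namespace IsMeasurablePartition

variable {D : ι → Set X} {E : Set X}

lemma subset (hD : IsMeasurablePartition D E) (i : ι) : D i ⊆ E :=
  hD.iUnion_eq ▸ Set.subset_iUnion D i

lemma inter (hD : IsMeasurablePartition D Set.univ) {S : Set X} (hS : MeasurableSet S) :
    IsMeasurablePartition (fun i => D i ∩ S) S where
  measurableSet i := (hD.measurableSet i).inter hS
  pairwise_disjoint _ _ hij :=
    (hD.pairwise_disjoint hij).mono Set.inter_subset_left Set.inter_subset_left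
  iUnion_eq := by rw [← Set.iUnion_inter, hD.iUnion_eq, Set.univ_inter]

lemma iUnion_refine [Countable κ] {Q : κ → Set X} (hQ : IsMeasurablePartition Q E)
    {D : κ → ι → Set X} (hD : ∀ c, IsMeasurablePartition (D c) (Q c)) :
    IsMeasurablePartition (fun i => ⋃ c, D c i) E where
  measurableSet i := .iUnion fun c => (hD c).measurableSet i
  pairwise_disjoint i j hij := by
    refine Set.disjoint_iUnion_left.2 fun c => Set.disjoint_iUnion_right.2 fun c' => ?_
    rcases eq_or_ne c c' with rfl | hcc'
    · exact (hD c).pairwise_disjoint hij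
    · exact (hQ.pairwise_disjoint hcc').mono ((hD c).subset i) ((hD c').subset j)
  iUnion_eq := by
    rw [Set.iUnion_comm]
    simp_rw [(hD _).iUnion_eq]
    exact hQ.iUnion_eq

lemma of_refine [Countable κ] {Q : κ → Set X} (hQ : IsMeasurablePartition Q E)
    {D : κ → ι → Set X} (hD : ∀ c, IsMeasurablePartition (D c) (Q c)) (i : ι) :
    IsMeasurablePartition (fun c => D c i) (⋃ c, D c i) where
  measurableSet c := (hD c).measurableSet i
  pairwise_disjoint _ _ hcc' := (hQ.pairwise_disjoint hcc').mono ((hD _).subset i) ((hD _).subset i)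
  iUnion_eq := rfl

lemma setIntegral_eq_sum [Fintype ι] (hD : IsMeasurablePartition D E) {ν : Measure X}
    {g : X → ℝ} (hg : IntegrableOn g E ν) :
    ∫ x in E, g x ∂ν = ∑ i, ∫ x in D i, g x ∂ν := by
  rw [← hD.iUnion_eq]
  exact integral_iUnion_fintype hD.measurableSet hD.pairwise_disjoint
    fun i => hg.mono_set (hD.subset i)

lemma iInter {τ : Type*} [Finite τ] {P : τ → ι → Set X}
    (hP : ∀ t, IsMeasurablePartition (P t) Set.univ) :
    IsMeasurablePartition (fun γ : τ → ι => ⋂ t, P t (γ t)) Set.univ where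
  measurableSet γ := .iInter fun t => (hP t).measurableSet (γ t)
  pairwise_disjoint γ γ' hγ := by
    obtain ⟨t, ht⟩ := Function.ne_iff.1 hγ
    exact ((hP t).pairwise_disjoint ht).mono (Set.iInter_subset _ t) (Set.iInter_subset _ t)
  iUnion_eq := by
    refine Set.eq_univ_of_forall fun x => ?_
    have hx : ∀ t, ∃ i, x ∈ P t i := fun t => Set.mem_iUnion.1 ((hP t).iUnion_eq ▸ trivial)
    choose γ hγ using hx
    exact Set.mem_iUnion.2 ⟨γ, Set.mem_iInter.2 hγ⟩

end IsMeasurablePartition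

end MeasureTheory

namespace MeasureTheory.Measure

variable {X : Type*} [MeasurableSpace X]

/-- Stronger than `NoAtoms`, which only asks singletons to be null. -/
def IsNonatomic (lam : Measure X) : Prop :=
  ∀ A, MeasurableSet A → 0 < lam A → ∃ B, MeasurableSet B ∧ B ⊆ A ∧ 0 < lam B ∧ 0 < lam (A \ B)

lemma exists_subset_half_maximal (lam : Measure X) (S : Set X) {b : ENNReal} (hb : b ≠ ⊤) :
    ∃ D ⊆ S, MeasurableSet D ∧ lam D ≤ b ∧
      ∀ D' ⊆ S, MeasurableSet D' → lam D' ≤ b → lam D' ≤ 2 * lam D := by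
  set V := {v | ∃ D ⊆ S, MeasurableSet D ∧ lam D ≤ b ∧ v = lam D}
  have hV : ∀ D' ⊆ S, MeasurableSet D' → lam D' ≤ b → lam D' ≤ sSup V :=
    fun D' hD'S hD' hD'b => le_sSup ⟨D', hD'S, hD', hD'b, rfl⟩
  have hVb : sSup V ≠ ⊤ := ne_top_of_le_ne_top hb (sSup_le fun _ ⟨_, _, _, h, hv⟩ => hv ▸ h)
  rcases eq_or_ne (sSup V) 0 with h0 | h0
  · refine ⟨∅, Set.empty_subset _, .empty, by simp, fun D' hD'S hD' hD'b => ?_⟩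
    simpa [h0] using hV D' hD'S hD' hD'b
  obtain ⟨_, ⟨D, hDS, hD, hDb, rfl⟩, hlt⟩ := lt_sSup_iff.1 (ENNReal.half_lt_self h0 hVb)
  refine ⟨D, hDS, hD, hDb, fun D' hD'S hD' hD'b => (hV D' hD'S hD' hD'b).trans ?_⟩
  calc sSup V = 2 * (sSup V / 2) := (ENNReal.mul_div_cancel two_ne_zero ENNReal.ofNat_ne_top).symm
    _ ≤ 2 * lam D := by gcongr

namespace IsNonatomic

variable {lam : Measure X}

lemma exists_subset_pos_two_pow_mul_le (hlam : lam.IsNonatomic) {A : Set X} (hA : MeasurableSet A)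
    (hpos : 0 < lam A) (n : ℕ) :
    ∃ D ⊆ A, MeasurableSet D ∧ 0 < lam D ∧ 2 ^ n * lam D ≤ lam A := by
  induction n with
  | zero => exact ⟨A, subset_rfl, hA, hpos, by simp⟩
  | succ n ih =>
    obtain ⟨D, hDA, hD, hDpos, hDle⟩ := ih
    obtain ⟨B, hB, hBD, hBpos, hBDpos⟩ := hlam D hD hDpos
    have hsum : lam B + lam (D \ B) = lam D := by
      rw [measure_add_sdiff hB.nullMeasurableSet, Set.union_eq_self_of_subset_left hBD]
    suffices ∃ E ⊆ D, MeasurableSet E ∧ 0 < lam E ∧ 2 * lam E ≤ lam D by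
      obtain ⟨E, hED, hE, hEpos, hEle⟩ := this
      refine ⟨E, hED.trans hDA, hE, hEpos, ?_⟩
      calc 2 ^ (n + 1) * lam E = 2 ^ n * (2 * lam E) := by rw [pow_succ, mul_assoc]
        _ ≤ 2 ^ n * lam D := by gcongr
        _ ≤ lam A := hDle
    rcases le_total (lam B) (lam (D \ B)) with h | h
    · exact ⟨B, hBD, hB, hBpos, by rw [← hsum, two_mul]; gcongr⟩
    · exact ⟨D \ B, Set.sdiff_subset, hD.diff hB, hBDpos, by rw [← hsum, two_mul]; gcongr⟩

lemma exists_subset_pos_le (hlam : lam.IsNonatomic) {A : Set X} (hA : MeasurableSet A)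
    (hpos : 0 < lam A) (hfin : lam A ≠ ⊤) {ε : ENNReal} (hε : 0 < ε) :
    ∃ D ⊆ A, MeasurableSet D ∧ 0 < lam D ∧ lam D ≤ ε := by
  obtain ⟨n, hn⟩ := ENNReal.exists_nat_gt (ENNReal.div_ne_top hfin hε.ne')
  obtain ⟨D, hDA, hD, hDpos, hDle⟩ := hlam.exists_subset_pos_two_pow_mul_le hA hpos n
  refine ⟨D, hDA, hD, hDpos, le_of_lt (lt_of_mul_lt_mul_left (a := 2 ^ n) ?_ (by positivity))⟩
  calc 2 ^ n * lam D ≤ lam A := hDle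
    _ < n * ε := (ENNReal.div_lt_iff (Or.inl hε.ne') (Or.inr hfin)).1 hn
    _ ≤ 2 ^ n * ε := by gcongr; exact_mod_cast (Nat.lt_two_pow_self).le

/-- Sierpiński's theorem. The subset is built greedily, each step taking at least half of what
is still available. -/
theorem exists_subset_measure_eq (hlam : lam.IsNonatomic) {A : Set X} (hA : MeasurableSet A)
    (hfin : lam A ≠ ⊤) {c : ENNReal} (hc : c ≤ lam A) :
    ∃ B ⊆ A, MeasurableSet B ∧ lam B = c := by
  have hcfin : c ≠ ⊤ := ne_top_of_le_ne_top hfin hc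
  choose step hstepS hstep hstepc hstepmax using fun B : Set X =>
    exists_subset_half_maximal lam (A \ B) (b := c - lam B) (by finiteness)
  let B : ℕ → Set X := fun n => Nat.rec ∅ (fun _ B => B ∪ step B) n
  have hB : ∀ n, B n ⊆ A ∧ MeasurableSet (B n) ∧ lam (B n) ≤ c := by
    intro n
    induction n with
    | zero => exact ⟨Set.empty_subset _, .empty, by simp [B]⟩
    | succ n ih =>
      obtain ⟨hBA, hBm, hBc⟩ := ih
      refine ⟨Set.union_subset hBA ((hstepS _).trans Set.sdiff_subset), hBm.union (hstep _), ?_⟩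
      calc lam (B (n + 1)) ≤ lam (B n) + lam (step (B n)) := measure_union_le _ _
        _ ≤ lam (B n) + (c - lam (B n)) := by gcongr; exact hstepc _
        _ = c := add_tsub_cancel_of_le hBc
  have hB_add : ∀ n, lam (B (n + 1)) = lam (B n) + lam (step (B n)) := fun n =>
    measure_union (Set.disjoint_right.2 fun _ hx => (hstepS _ hx).2) (hstep _)
  have hB_mono : Monotone B := monotone_nat_of_le_succ fun n => Set.subset_union_left
  have hU : lam (⋃ n, B n) ≤ c := by
    rw [hB_mono.measure_iUnion]
    exact iSup_le fun n => (hB n).2.2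
  refine ⟨⋃ n, B n, Set.iUnion_subset fun n => (hB n).1, .iUnion fun n => (hB n).2.1, ?_⟩
  by_contra hne
  have hlt : lam (⋃ n, B n) < c := lt_of_le_of_ne hU hne
  have hrest : 0 < lam (A \ ⋃ n, B n) := by
    rw [measure_sdiff (Set.iUnion_subset fun n => (hB n).1)
      (MeasurableSet.iUnion fun n => (hB n).2.1).nullMeasurableSet (by finiteness)]
    exact tsub_pos_of_lt (hlt.trans_le hc)
  -- if the greedy union fell short, a fixed piece `D` of the rest was available at every step
  obtain ⟨D, hDS, hD, hDpos, hDle⟩ := hlam.exists_subset_pos_le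
    (hA.diff (.iUnion fun n => (hB n).2.1)) hrest
    (ne_top_of_le_ne_top hfin (measure_mono Set.sdiff_subset)) (tsub_pos_of_lt hlt)
  have hgrow : ∀ n : ℕ, n * (lam D / 2) ≤ lam (B n) := by
    intro n
    induction n with
    | zero => simp [B]
    | succ n ih =>
      have hDn : lam D ≤ 2 * lam (step (B n)) := hstepmax _ _
        (hDS.trans (Set.sdiff_subset_sdiff_right (Set.subset_iUnion B n))) hD
        (hDle.trans (tsub_le_tsub_left (measure_mono (Set.subset_iUnion B n)) c))
      rw [hB_add, Nat.cast_succ, add_mul, one_mul]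
      gcongr
      rwa [ENNReal.div_le_iff two_ne_zero ENNReal.ofNat_ne_top, mul_comm]
  obtain ⟨n, hn⟩ := ENNReal.exists_nat_mul_gt (ENNReal.half_pos hDpos.ne').ne' hcfin
  exact (hn.trans_le (hgrow n)).not_ge (hB n).2.2

theorem exists_partition_measure_eq (hlam : lam.IsNonatomic) {n : ℕ} {G : Set X}
    (hG : MeasurableSet G) (hfin : lam G ≠ ⊤) (c : Fin (n + 1) → ENNReal)
    (hc : ∑ i, c i = lam G) :
    ∃ D : Fin (n + 1) → Set X, IsMeasurablePartition D G ∧ ∀ i, lam (D i) = c i := by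
  induction n generalizing G with
  | zero =>
    refine ⟨fun _ => G, ⟨fun _ => hG, fun i j hij => (hij (Fin.subsingleton_one.elim i j)).elim,
      Set.iUnion_const G⟩, fun i => ?_⟩
    simpa [Fin.fin_one_eq_zero i] using hc.symm
  | succ n ih =>
    rw [Fin.sum_univ_succ] at hc
    obtain ⟨B, hBG, hB, hBc⟩ := hlam.exists_subset_measure_eq hG hfin
      (hc ▸ le_self_add : c 0 ≤ lam G)
    have hrest : ∑ i : Fin (n + 1), c i.succ = lam (G \ B) := by
      rw [measure_sdiff hBG hB.nullMeasurableSet (ne_top_of_le_ne_top hfin (measure_mono hBG)),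
        hBc, ← hc, ENNReal.add_sub_cancel_left (hBc ▸ ne_top_of_le_ne_top hfin (measure_mono hBG))]
    obtain ⟨D, ⟨hD, hDdisj, hDG⟩, hDc⟩ := ih (hG.diff hB)
      (ne_top_of_le_ne_top hfin (measure_mono Set.sdiff_subset)) _ hrest
    have hBD : ∀ i, Disjoint B (D i) := fun i =>
      Set.disjoint_right.2 fun _ hx => (hDG ▸ Set.mem_iUnion_of_mem i hx : _ ∈ G \ B).2
    refine ⟨Fin.cons B D, ⟨Fin.cases hB hD, ?_, ?_⟩, Fin.cases hBc hDc⟩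
    · intro i j hij
      cases i using Fin.cases <;> cases j using Fin.cases
      · exact (hij rfl).elim
      · exact hBD _
      · exact (hBD _).symm
      · exact hDdisj (fun h => hij (congrArg Fin.succ h))
    · rw [Set.iUnion_cons, hDG, Set.union_sdiff_cancel hBG]

theorem exists_partition_toReal_eq_mul [IsFiniteMeasure lam] (hlam : lam.IsNonatomic) {m : ℕ}
    [NeZero m] {E : Set X} (hE : MeasurableSet E) {θ : Fin m → ℝ} (hθ0 : ∀ i, 0 ≤ θ i)
    (hθ1 : ∑ i, θ i = 1) :
    ∃ D : Fin m → Set X, IsMeasurablePartition D E ∧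
      ∀ i, (lam (D i)).toReal = θ i * (lam E).toReal := by
  obtain ⟨n, rfl⟩ : ∃ n, m = n + 1 := ⟨m - 1, (Nat.succ_pred_eq_of_ne_zero (NeZero.ne m)).symm⟩
  obtain ⟨D, hD, hDc⟩ := hlam.exists_partition_measure_eq hE (measure_ne_top lam E)
    (fun i => ENNReal.ofReal (θ i) * lam E)
    (by rw [← Finset.sum_mul, ← ENNReal.ofReal_sum_of_nonneg fun i _ => hθ0 i, hθ1,
      ENNReal.ofReal_one, one_mul])
  exact ⟨D, hD, fun i => by rw [hDc, ENNReal.toReal_mul, ENNReal.toReal_ofReal (hθ0 i)]⟩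

lemma finsetSum {ι : Type*} (s : Finset ι) {μ : ι → Measure X}
    (hμ : ∀ i ∈ s, (μ i).IsNonatomic) : (∑ i ∈ s, μ i).IsNonatomic := by
  intro A hA hpos
  simp only [Measure.finsetSum_apply] at hpos ⊢
  obtain ⟨i, hi, hAi⟩ := Finset.sum_pos_iff.1 hpos
  obtain ⟨B, hB, hBA, hBpos, hABpos⟩ := hμ i hi A hA hAi
  have hle : ∀ S, μ i S ≤ ∑ k ∈ s, μ k S := fun S =>
    Finset.single_le_sum (f := fun k => μ k S) (fun _ _ => zero_le) hi
  exact ⟨B, hB, hBA, hBpos.trans_le (hle B), hABpos.trans_le (hle _)⟩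

end IsNonatomic

end MeasureTheory.Measure

section MaxsumPartition

variable {C : Type*} {m : ℕ} {f : Fin m → C → ℝ}

def maxSet (f : Fin m → C → ℝ) (α : Fin m → ℝ) (k : Fin m) : Set C :=
  {x | ∀ h, α h * f h x ≤ α k * f k x}

/-- The maxsum partition for `α` that breaks ties in favour of the smallest index. -/
def maxsumPart (f : Fin m → C → ℝ) (α : Fin m → ℝ) : Fin m → Set C :=
  disjointed (maxSet f α)

lemma mul_le_of_mem_maxsumPart {α : Fin m → ℝ} {k : Fin m} {x : C}
    (hx : x ∈ maxsumPart f α k) (h : Fin m) : α h * f h x ≤ α k * f k x :=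
  disjointed_subset _ k hx h

lemma iSup_mul_eq_of_mem_maxsumPart {α : Fin m → ℝ} {k : Fin m} {x : C}
    (hx : x ∈ maxsumPart f α k) : ⨆ j, α j * f j x = α k * f k x :=
  have : Nonempty (Fin m) := ⟨k⟩
  le_antisymm (ciSup_le (mul_le_of_mem_maxsumPart hx))
    (le_ciSup (f := fun j => α j * f j x) (Finite.bddAbove_range _) k)

variable [MeasurableSpace C] {ν : Measure C}

/-- The paper's `g(α)`. -/
noncomputable def supIntegral (ν : Measure C) (f : Fin m → C → ℝ) (α : Fin m → ℝ) : ℝ :=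
  ∫ x, ⨆ j, α j * f j x ∂ν

noncomputable def partValue (ν : Measure C) (f : Fin m → C → ℝ) (α : Fin m → ℝ) (j : Fin m) : ℝ :=
  ∫ x in maxsumPart f α j, f j x ∂ν

lemma measurableSet_maxSet (hf : ∀ j, Measurable (f j)) (α : Fin m → ℝ) (k : Fin m) :
    MeasurableSet (maxSet f α k) := by
  simp only [maxSet, Set.ofPred_forall]
  exact .iInter fun h => measurableSet_le (by fun_prop) (by fun_prop)

lemma isMeasurablePartition_maxsumPart [NeZero m] (hf : ∀ j, Measurable (f j))
    (α : Fin m → ℝ) : IsMeasurablePartition (maxsumPart f α) Set.univ where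
  measurableSet k := disjointedRec (fun _ _ ht => ht.diff (measurableSet_maxSet hf α _))
    (measurableSet_maxSet hf α k)
  pairwise_disjoint := disjoint_disjointed _
  iUnion_eq := by
    rw [maxsumPart, iUnion_disjointed]
    exact Set.eq_univ_of_forall fun x => Set.mem_iUnion.2 (Finite.exists_max fun j => α j * f j x)

lemma integrable_iSup_mul [NeZero m] (hf_meas : ∀ j, Measurable (f j))
    (hf_int : ∀ j, Integrable (f j) ν) (α : Fin m → ℝ) :
    Integrable (fun x => ⨆ j, α j * f j x) ν := by
  refine Integrable.mono'
    (integrable_finsetSum Finset.univ fun j _ => ((hf_int j).const_mul (α j)).norm)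
    (Measurable.iSup fun j => (hf_meas j).const_mul (α j)).aestronglyMeasurable
    (Eventually.of_forall fun x => ?_)
  obtain ⟨k, hk⟩ := exists_eq_ciSup_of_finite (f := fun j => α j * f j x)
  rw [← hk]
  exact Finset.single_le_sum (f := fun j => ‖α j * f j x‖) (fun _ _ => norm_nonneg _)
    (Finset.mem_univ k)

variable [NeZero m] (hf_meas : ∀ j, Measurable (f j)) (hf_int : ∀ j, Integrable (f j) ν)
include hf_meas hf_int

lemma sum_mul_setIntegral_le_supIntegral {A : Fin m → Set C}
    (hA : IsMeasurablePartition A Set.univ) (β : Fin m → ℝ) :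
    ∑ k, β k * ∫ x in A k, f k x ∂ν ≤ supIntegral ν f β := by
  rw [supIntegral, ← setIntegral_univ,
    hA.setIntegral_eq_sum (integrable_iSup_mul hf_meas hf_int β).integrableOn]
  refine Finset.sum_le_sum fun k _ => ?_
  rw [← integral_const_mul]
  exact setIntegral_mono ((hf_int k).const_mul _).integrableOn
    (integrable_iSup_mul hf_meas hf_int β).integrableOn
    fun x => le_ciSup (f := fun j => β j * f j x) (Finite.bddAbove_range _) k

lemma supIntegral_eq_sum_mul_partValue (α : Fin m → ℝ) :
    supIntegral ν f α = ∑ k, α k * partValue ν f α k := by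
  have hP := isMeasurablePartition_maxsumPart hf_meas α
  rw [supIntegral, ← setIntegral_univ,
    hP.setIntegral_eq_sum (integrable_iSup_mul hf_meas hf_int α).integrableOn]
  refine Finset.sum_congr rfl fun k _ => ?_
  rw [partValue, ← integral_const_mul]
  exact setIntegral_congr_fun (hP.measurableSet k) fun x hx => iSup_mul_eq_of_mem_maxsumPart hx

lemma mul_integral_le_supIntegral (α : Fin m → ℝ) (k : Fin m) :
    α k * ∫ x, f k x ∂ν ≤ supIntegral ν f α := by
  rw [← integral_const_mul]
  exact integral_mono ((hf_int k).const_mul _) (integrable_iSup_mul hf_meas hf_int α)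
    fun x => le_ciSup (f := fun j => α j * f j x) (Finite.bddAbove_range _) k

end MaxsumPartition

section ProportionalDivision

variable {C : Type*} {m : ℕ} {f : Fin m → C → ℝ}

/-- Where all `f j` vanish, the defining equation reads `⌊0⌋ = c j` (as `x / 0 = 0`), so such
points lie in the cell `0`. -/
def levelCell (N : ℕ) (f : Fin m → C → ℝ) (c : Fin m → Fin (N + 1)) : Set C :=
  {x | ∀ j, ⌊N * f j x / ∑ i, f i x⌋₊ = c j}

lemma bounds_of_mem_levelCell (hf_nonneg : ∀ j x, 0 ≤ f j x) {N : ℕ} (hN : 0 < N)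
    {c : Fin m → Fin (N + 1)} {x : C} (hx : x ∈ levelCell N f c) (j : Fin m) :
    (c j / N : ℝ) * ∑ i, f i x ≤ f j x ∧ f j x ≤ ((c j / N : ℝ) + (N : ℝ)⁻¹) * ∑ i, f i x := by
  have hF : f j x ≤ ∑ i, f i x :=
    Finset.single_le_sum (fun i _ => hf_nonneg i x) (Finset.mem_univ j)
  rcases (Finset.sum_nonneg fun i _ => hf_nonneg i x).eq_or_lt with hF0 | hF0
  · have : f j x = 0 := le_antisymm (hF0 ▸ hF) (hf_nonneg j x)
    simp [← hF0, this]
  have hNR : (0 : ℝ) < N := Nat.cast_pos.2 hN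
  have hfloor := hx j
  have h1 := Nat.floor_le (div_nonneg (mul_nonneg hNR.le (hf_nonneg j x)) hF0.le)
  have h2 := Nat.lt_floor_add_one (N * f j x / ∑ i, f i x)
  rw [hfloor, le_div_iff₀ hF0] at h1
  rw [hfloor, div_lt_iff₀ hF0] at h2
  constructor
  · rw [div_mul_eq_mul_div, div_le_iff₀ hNR]; linarith
  · rw [show (c j / N : ℝ) + (N : ℝ)⁻¹ = ((c j : ℝ) + 1) / N by ring, div_mul_eq_mul_div,
      le_div_iff₀ hNR]
    linarith

variable [MeasurableSpace C] {ν : Measure C}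

lemma isMeasurablePartition_levelCell (hf_meas : ∀ j, Measurable (f j))
    (hf_nonneg : ∀ j x, 0 ≤ f j x) (N : ℕ) :
    IsMeasurablePartition (levelCell N f) Set.univ where
  measurableSet c := by
    simp only [levelCell, Set.ofPred_forall]
    exact .iInter fun j => measurableSet_eq_fun (by fun_prop) measurable_const
  pairwise_disjoint c c' hcc' := by
    obtain ⟨j, hj⟩ := Function.ne_iff.1 hcc'
    exact Set.disjoint_left.2 fun x hx hx' => hj (Fin.ext ((hx j).symm.trans (hx' j)))
  iUnion_eq := by
    refine Set.eq_univ_of_forall fun x => Set.mem_iUnion.2 ?_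
    have hle : ∀ j, N * f j x / ∑ i, f i x ≤ N := fun j =>
      div_le_of_le_mul₀ (Finset.sum_nonneg fun i _ => hf_nonneg i x) (Nat.cast_nonneg N)
        (mul_le_mul_of_nonneg_left
          (Finset.single_le_sum (fun i _ => hf_nonneg i x) (Finset.mem_univ j)) (Nat.cast_nonneg N))
    exact ⟨fun j => ⟨_, Nat.lt_succ_of_le (Nat.floor_le_of_le (hle j))⟩, fun j => rfl⟩

lemma mul_setIntegral_sub_le_setIntegral {F g : C → ℝ} {G D : Set C} (hG : MeasurableSet G)
    (hD : MeasurableSet D) (hDG : D ⊆ G) (hF : IntegrableOn F G ν) (hg : IntegrableOn g G ν)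
    (hF0 : ∀ x ∈ G, 0 ≤ F x)
    {a η θ : ℝ} (hη : 0 ≤ η) (hθ0 : 0 ≤ θ) (hθ1 : θ ≤ 1)
    (hbounds : ∀ x ∈ G, a * F x ≤ g x ∧ g x ≤ (a + η) * F x)
    (hDF : ∫ x in D, F x ∂ν = θ * ∫ x in G, F x ∂ν) :
    θ * ∫ x in G, g x ∂ν - η * ∫ x in G, F x ∂ν ≤ ∫ x in D, g x ∂ν := by
  have hD_ge : a * (θ * ∫ x in G, F x ∂ν) ≤ ∫ x in D, g x ∂ν := by
    rw [← hDF, ← integral_const_mul]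
    exact setIntegral_mono_on ((hF.mono_set hDG).const_mul a) (hg.mono_set hDG)
      hD fun x hx => (hbounds x (hDG hx)).1
  have hG_le : ∫ x in G, g x ∂ν ≤ (a + η) * ∫ x in G, F x ∂ν := by
    rw [← integral_const_mul]
    exact setIntegral_mono_on hg (hF.const_mul _) hG fun x hx => (hbounds x hx).2
  have hGF : 0 ≤ ∫ x in G, F x ∂ν := setIntegral_nonneg hG hF0
  nlinarith [mul_le_mul_of_nonneg_left hG_le hθ0, mul_nonneg (mul_nonneg (sub_nonneg.2 hθ1) hη) hGF]

variable [NeZero m] (hf_meas : ∀ j, Measurable (f j)) (hf_nonneg : ∀ j x, 0 ≤ f j x)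
  (hf_int : ∀ j, Integrable (f j) ν) {lam : Measure C} [IsFiniteMeasure lam]
  (hlam : lam.IsNonatomic) (hlamF : ∀ A, MeasurableSet A → (lam A).toReal = ∫ x in A, ∑ j, f j x ∂ν)
include hf_meas hf_nonneg hf_int hlam hlamF

/-- Split each level cell, on which the ratios `f_j / ∑ f` are almost constant, exactly in the
proportions `θ` for `lam`. -/
lemma exists_partition_mul_setIntegral_sub_le {E : Set C} (hE : MeasurableSet E) {θ : Fin m → ℝ}
    (hθ0 : ∀ j, 0 ≤ θ j) (hθ1 : ∑ j, θ j = 1) {N : ℕ} (hN : 0 < N) :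
    ∃ D : Fin m → Set C, IsMeasurablePartition D E ∧ ∀ j,
      θ j * ∫ x in E, f j x ∂ν - (N : ℝ)⁻¹ * ∫ x in E, ∑ i, f i x ∂ν ≤ ∫ x in D j, f j x ∂ν := by
  have hQ := (isMeasurablePartition_levelCell hf_meas hf_nonneg N).inter hE
  choose D hD hDθ using fun c => hlam.exists_partition_toReal_eq_mul (hQ.measurableSet c) hθ0 hθ1
  have hF_int : Integrable (fun x => ∑ i, f i x) ν := integrable_finsetSum _ fun i _ => hf_int i
  refine ⟨_, hQ.iUnion_refine hD, fun j => ?_⟩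
  have hθj1 : θ j ≤ 1 := hθ1 ▸ Finset.single_le_sum (fun i _ => hθ0 i) (Finset.mem_univ j)
  have hcell : ∀ c, θ j * ∫ x in levelCell N f c ∩ E, f j x ∂ν -
      (N : ℝ)⁻¹ * ∫ x in levelCell N f c ∩ E, ∑ i, f i x ∂ν ≤ ∫ x in D c j, f j x ∂ν := fun c =>
    mul_setIntegral_sub_le_setIntegral (hQ.measurableSet c) ((hD c).measurableSet j)
      ((hD c).subset j) hF_int.integrableOn (hf_int j).integrableOn
      (fun x _ => Finset.sum_nonneg fun i _ => hf_nonneg i x) (by positivity) (hθ0 j) hθj1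
      (fun x hx => bounds_of_mem_levelCell hf_nonneg hN hx.1 j)
      (by rw [← hlamF _ ((hD c).measurableSet j), hDθ, hlamF _ (hQ.measurableSet c)])
  calc θ j * ∫ x in E, f j x ∂ν - (N : ℝ)⁻¹ * ∫ x in E, ∑ i, f i x ∂ν
      = ∑ c, (θ j * ∫ x in levelCell N f c ∩ E, f j x ∂ν -
          (N : ℝ)⁻¹ * ∫ x in levelCell N f c ∩ E, ∑ i, f i x ∂ν) := by
        rw [hQ.setIntegral_eq_sum (hf_int j).integrableOn,
          hQ.setIntegral_eq_sum hF_int.integrableOn,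
          Finset.mul_sum, Finset.mul_sum, Finset.sum_sub_distrib]
    _ ≤ ∑ c, ∫ x in D c j, f j x ∂ν := Finset.sum_le_sum fun c _ => hcell c
    _ = ∫ x in ⋃ c, D c j, f j x ∂ν :=
        ((hQ.of_refine hD j).setIntegral_eq_sum (hf_int j).integrableOn).symm

/-- Divide each cell of the common refinement among the labels in proportion to the weight that
each label receives there. -/
lemma exists_partition_sum_mul_setIntegral_sub_le {τ : Type*} [Fintype τ]
    {P : τ → Fin m → Set C} (hP : ∀ t, IsMeasurablePartition (P t) Set.univ) {p : τ → ℝ}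
    (hp0 : ∀ t, 0 ≤ p t) (hp1 : ∑ t, p t = 1) {N : ℕ} (hN : 0 < N) :
    ∃ A : Fin m → Set C, IsMeasurablePartition A Set.univ ∧ ∀ j,
      ∑ t, p t * ∫ x in P t j, f j x ∂ν - (N : ℝ)⁻¹ * ∫ x, ∑ i, f i x ∂ν ≤
        ∫ x in A j, f j x ∂ν := by
  classical
  set Q : (τ → Fin m) → Set C := fun γ => ⋂ t, P t (γ t)
  have hQ : IsMeasurablePartition Q Set.univ := IsMeasurablePartition.iInter hP
  set θ : (τ → Fin m) → Fin m → ℝ := fun γ j => ∑ t, if γ t = j then p t else 0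
  have hθ0 : ∀ γ j, 0 ≤ θ γ j := fun γ j =>
    Finset.sum_nonneg fun t _ => by split_ifs <;> simp [hp0 t]
  have hθ1 : ∀ γ, ∑ j, θ γ j = 1 := fun γ => by
    rw [Finset.sum_comm]; simp [hp1]
  choose D hD hDge using fun γ => exists_partition_mul_setIntegral_sub_le hf_meas hf_nonneg hf_int
    hlam hlamF (hQ.measurableSet γ) (hθ0 γ) (hθ1 γ) hN
  have hF_int : Integrable (fun x => ∑ i, f i x) ν := integrable_finsetSum _ fun i _ => hf_int i
  refine ⟨_, hQ.iUnion_refine hD, fun j => ?_⟩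
  have hP_eq : ∀ t, ∫ x in P t j, f j x ∂ν =
      ∑ γ, if γ t = j then ∫ x in Q γ, f j x ∂ν else 0 := by
    intro t
    rw [(hQ.inter ((hP t).measurableSet j)).setIntegral_eq_sum (hf_int j).integrableOn]
    refine Finset.sum_congr rfl fun γ _ => ?_
    split_ifs with h
    · rw [Set.inter_eq_left.2 (h ▸ Set.iInter_subset _ t)]
    · rw [Set.disjoint_iff_inter_eq_empty.1 (((hP t).pairwise_disjoint h).mono_left
        (Set.iInter_subset _ t)), setIntegral_empty]
  have hmix : ∑ t, p t * ∫ x in P t j, f j x ∂ν = ∑ γ, θ γ j * ∫ x in Q γ, f j x ∂ν := by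
    simp_rw [hP_eq, θ, Finset.mul_sum, Finset.sum_mul, mul_ite, ite_mul, mul_zero, zero_mul]
    exact Finset.sum_comm
  calc ∑ t, p t * ∫ x in P t j, f j x ∂ν - (N : ℝ)⁻¹ * ∫ x, ∑ i, f i x ∂ν
      = ∑ γ, (θ γ j * ∫ x in Q γ, f j x ∂ν - (N : ℝ)⁻¹ * ∫ x in Q γ, ∑ i, f i x ∂ν) := by
        rw [hmix, ← setIntegral_univ, hQ.setIntegral_eq_sum hF_int.integrableOn, Finset.mul_sum,
          Finset.sum_sub_distrib]
    _ ≤ ∑ γ, ∫ x in D γ j, f j x ∂ν := Finset.sum_le_sum fun γ _ => hDge γ j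
    _ = ∫ x in ⋃ γ, D γ j, f j x ∂ν :=
        ((hQ.of_refine hD j).setIntegral_eq_sum (hf_int j).integrableOn).symm

end ProportionalDivision

lemma exists_sum_sq_le_add_mul_sum {s : ℕ → ℝ} (hs0 : ∀ t, 0 ≤ s t) (hs : Tendsto s atTop (𝓝 0))
    {ε : ℝ} (hε : 0 < ε) :
    ∃ K, ∀ T, ∑ t ∈ Finset.range T, s t ^ 2 ≤ K + ε * ∑ t ∈ Finset.range T, s t := by
  obtain ⟨T₀, hT₀⟩ := eventually_atTop.1 (hs.eventually (ge_mem_nhds hε))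
  refine ⟨∑ t ∈ Finset.range T₀, s t ^ 2, fun T => ?_⟩
  calc ∑ t ∈ Finset.range T, s t ^ 2
      ≤ ∑ t ∈ Finset.range T, ((if t < T₀ then s t ^ 2 else 0) + ε * s t) := by
        refine Finset.sum_le_sum fun t _ => ?_
        split_ifs with h
        · nlinarith [hs0 t]
        · nlinarith [hs0 t, hT₀ t (not_lt.1 h)]
    _ = ∑ t ∈ (Finset.range T).filter (· < T₀), s t ^ 2 + ε * ∑ t ∈ Finset.range T, s t := by
        rw [Finset.sum_add_distrib, Finset.sum_filter, Finset.mul_sum]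
    _ ≤ ∑ t ∈ Finset.range T₀, s t ^ 2 + ε * ∑ t ∈ Finset.range T, s t := by
        refine add_le_add_left (Finset.sum_le_sum_of_subset_of_nonneg (fun t ht => ?_)
          fun t _ _ => sq_nonneg _) _
        exact Finset.mem_range.2 (Finset.mem_filter.1 ht).2

lemma tendsto_iInf_fin_succ_of_forall_le {a : ℕ → ℝ} {L : ℝ} (hle : ∀ t, L ≤ a t)
    (hlt : ∀ ε > 0, ∃ t, a t < L + ε) :
    Tendsto (fun t => ⨅ i : Fin (t + 1), a i) atTop (𝓝 L) := by
  refine tendsto_order.2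
    ⟨fun b hb => Eventually.of_forall fun t => hb.trans_le (le_ciInf fun i => hle i),
    fun b hb => ?_⟩
  obtain ⟨t₀, ht₀⟩ := hlt (b - L) (sub_pos.2 hb)
  refine eventually_atTop.2 ⟨t₀, fun t ht => ?_⟩
  calc ⨅ i : Fin (t + 1), a i ≤ a t₀ :=
        ciInf_le (Finite.bddBelow_range _) (⟨t₀, Nat.lt_succ_of_le ht⟩ : Fin (t + 1))
    _ < b := by linarith

lemma tendsto_sum_range_atTop_of_eventuallyEq {s s' : ℕ → ℝ} (h : s =ᶠ[atTop] s')
    (hs : Tendsto (fun n => ∑ t ∈ Finset.range n, s t) atTop atTop) :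
    Tendsto (fun n => ∑ t ∈ Finset.range n, s' t) atTop atTop := by
  obtain ⟨N, hN⟩ := eventually_atTop.1 h
  refine (tendsto_atTop_add_const_right atTop (∑ t ∈ Finset.range N, (s' t - s t)) hs).congr'
    (eventually_atTop.2 ⟨N, fun n hn => ?_⟩)
  have : ∑ t ∈ Finset.range n, (s' t - s t) = ∑ t ∈ Finset.range N, (s' t - s t) :=
    (Finset.sum_subset (Finset.range_subset_range.2 hn) fun t _ ht =>
      by rw [hN t (not_lt.1 (Finset.mem_range.not.1 ht)), sub_self]).symm
  rw [← this, Finset.sum_sub_distrib]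
  ring

lemma exists_steps_le_min {s : ℕ → ℝ} (hs_pos : ∀ t, 0 < s t) (hs_lim : Tendsto s atTop (𝓝 0))
    (hs_div : Tendsto (fun n => ∑ t ∈ Finset.range n, s t) atTop atTop) {δ : ℝ} (hδ : 0 < δ) :
    ∃ s' : ℕ → ℝ, (∀ t, 0 < s' t ∧ s' t ≤ s t) ∧ (∀ t, s' t ≤ δ) ∧
      Tendsto s' atTop (𝓝 0) ∧ Tendsto (fun n => ∑ t ∈ Finset.range n, s' t) atTop atTop :=
  ⟨fun t => min (s t) δ, fun t => ⟨lt_min (hs_pos t) hδ, min_le_left _ _⟩,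
    fun t => min_le_right _ _,
    by simpa [min_eq_left hδ.le] using hs_lim.min (tendsto_const_nhds (x := δ)),
    tendsto_sum_range_atTop_of_eventuallyEq
      ((hs_lim.eventually (ge_mem_nhds hδ)).mono fun t ht => (min_eq_left ht).symm) hs_div⟩

section SubgradientMethod

variable {m : ℕ}

def HasVanishingRegret (s : ℕ → ℝ) (α u : ℕ → Fin m → ℝ) : Prop :=
  ∀ ε > 0, ∃ T, 0 < ∑ t ∈ Finset.range T, s t ∧ ∀ β ∈ stdSimplex ℝ (Fin m),
    ∑ t ∈ Finset.range T, s t * ∑ i, (α t i - β i) * u t i ≤ ε * ∑ t ∈ Finset.range T, s t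

noncomputable def subgradientStep (s : ℝ) (α u : Fin m → ℝ) : Fin m → ℝ :=
  fun i => α i - s * (u i - (∑ j, u j) / m)

noncomputable def subgradientSeq (s : ℕ → ℝ) (U : (Fin m → ℝ) → Fin m → ℝ) (α₀ : Fin m → ℝ) :
    ℕ → Fin m → ℝ
  | 0 => α₀
  | t + 1 => subgradientStep (s t) (subgradientSeq s U α₀ t) (U (subgradientSeq s U α₀ t))

lemma sum_subgradientStep [NeZero m] (s : ℝ) (α u : Fin m → ℝ) :
    ∑ i, subgradientStep s α u i = ∑ i, α i := by
  simp only [subgradientStep, Finset.sum_sub_distrib, ← Finset.mul_sum, Finset.sum_const,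
    Finset.card_univ, Fintype.card_fin, nsmul_eq_mul]
  rw [mul_div_cancel₀ _ (Nat.cast_ne_zero.2 (NeZero.ne m)), sub_self, mul_zero, sub_zero]

lemma sum_subgradientSeq [NeZero m] (s : ℕ → ℝ) (U : (Fin m → ℝ) → Fin m → ℝ)
    (α₀ : Fin m → ℝ) (t : ℕ) : ∑ i, subgradientSeq s U α₀ t i = ∑ i, α₀ i := by
  induction t with
  | zero => rfl
  | succ t ih => rw [subgradientSeq, sum_subgradientStep, ih]

lemma sum_sq_subgradientStep_sub_le (s : ℝ) {α u β : Fin m → ℝ} (hu0 : ∀ i, 0 ≤ u i)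
    (hu1 : ∀ i, u i ≤ 1) (hαβ : ∑ i, α i = ∑ i, β i) :
    ∑ i, (subgradientStep s α u i - β i) ^ 2 ≤
      ∑ i, (α i - β i) ^ 2 - 2 * s * ∑ i, (α i - β i) * u i + m * s ^ 2 := by
  set ū := (∑ j, u j) / m
  have hū0 : 0 ≤ ū := div_nonneg (Finset.sum_nonneg fun j _ => hu0 j) (Nat.cast_nonneg m)
  have hū1 : ū ≤ 1 := div_le_one_of_le₀
    ((Finset.sum_le_sum fun j _ => hu1 j).trans (by simp)) (Nat.cast_nonneg m)
  have hcross : ∑ i, (α i - β i) * (u i - ū) = ∑ i, (α i - β i) * u i := by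
    simp only [mul_sub, Finset.sum_sub_distrib, ← Finset.sum_mul, hαβ, sub_self, zero_mul,
      sub_zero]
  have hvar : ∑ i, (u i - ū) ^ 2 ≤ m := by
    calc ∑ i, (u i - ū) ^ 2 ≤ ∑ _i : Fin m, (1 : ℝ) :=
          Finset.sum_le_sum fun i _ => by nlinarith [hu0 i, hu1 i]
      _ = m := by simp
  calc ∑ i, (subgradientStep s α u i - β i) ^ 2
      = ∑ i, (α i - β i) ^ 2 - 2 * s * ∑ i, (α i - β i) * (u i - ū) +
          s ^ 2 * ∑ i, (u i - ū) ^ 2 := by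
        simp only [subgradientStep, Finset.mul_sum, ← Finset.sum_sub_distrib,
          ← Finset.sum_add_distrib]
        exact Finset.sum_congr rfl fun i _ => by ring
    _ ≤ _ := by rw [hcross]; nlinarith [sq_nonneg s]

lemma le_subgradientStep {s δ ρ : ℝ} {α u : Fin m → ℝ} (hs0 : 0 ≤ s) (hsδ : s ≤ δ) (hρδ : ρ ≤ δ)
    (hu0 : ∀ i, 0 ≤ u i) (hu1 : ∀ i, u i ≤ 1) {i : Fin m} (hαi : ρ ≤ α i)
    (hsmall : α i ≤ 2 * δ → u i ≤ (∑ j, u j) / m) : ρ ≤ subgradientStep s α u i := by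
  have hū0 : 0 ≤ (∑ j, u j) / m :=
    div_nonneg (Finset.sum_nonneg fun j _ => hu0 j) (Nat.cast_nonneg m)
  rw [subgradientStep]
  by_cases h : α i ≤ 2 * δ
  · nlinarith [mul_nonneg hs0 (sub_nonneg.2 (hsmall h))]
  · nlinarith [mul_le_mul_of_nonneg_left (show u i - (∑ j, u j) / m ≤ 1 by linarith [hu1 i]) hs0]

lemma sum_sq_sub_le_of_mem_stdSimplex {α β : Fin m → ℝ} (hα : α ∈ stdSimplex ℝ (Fin m))
    (hβ : β ∈ stdSimplex ℝ (Fin m)) : ∑ i, (α i - β i) ^ 2 ≤ m := by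
  calc ∑ i, (α i - β i) ^ 2 ≤ ∑ _i : Fin m, (1 : ℝ) := Finset.sum_le_sum fun i _ => by
        have := mem_Icc_of_mem_stdSimplex hα i
        have := mem_Icc_of_mem_stdSimplex hβ i
        simp only [Set.mem_Icc] at *
        nlinarith
    _ = m := by simp

variable [NeZero m] {s : ℕ → ℝ} {U : (Fin m → ℝ) → Fin m → ℝ} {α₀ : Fin m → ℝ}

lemma exists_pos_le_subgradientSeq {δ : ℝ} (hδ : 0 < δ) (hs0 : ∀ t, 0 ≤ s t)
    (hsδ : ∀ t, s t ≤ δ) (hU : ∀ α i, U α i ∈ Set.Icc 0 1)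
    (hsmall : ∀ α ∈ stdSimplex ℝ (Fin m), ∀ i, α i ≤ 2 * δ → U α i ≤ (∑ j, U α j) / m)
    (hα₀ : ∀ i, 0 < α₀ i) (hα₀1 : ∑ i, α₀ i = 1) :
    ∃ ρ > 0, ∀ t i, ρ ≤ subgradientSeq s U α₀ t i := by
  refine ⟨min δ (Finset.univ.inf' Finset.univ_nonempty α₀),
    lt_min hδ ((Finset.lt_inf'_iff _).2 fun i _ => hα₀ i), fun t => ?_⟩
  induction t with
  | zero => exact fun i => (min_le_right _ _).trans (Finset.inf'_le _ (Finset.mem_univ i))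
  | succ t ih =>
    have hmem : subgradientSeq s U α₀ t ∈ stdSimplex ℝ (Fin m) :=
      ⟨fun i => (le_min hδ.le (Finset.le_inf' _ _ fun i _ => (hα₀ i).le)).trans (ih i),
        (sum_subgradientSeq s U α₀ t).trans hα₀1⟩
    exact fun i => le_subgradientStep (hs0 t) (hsδ t) (min_le_left _ _) (fun i => (hU _ i).1)
      (fun i => (hU _ i).2) (ih i) (hsmall _ hmem i)

lemma two_mul_sum_regret_le (hU : ∀ α i, U α i ∈ Set.Icc 0 1)
    {β : Fin m → ℝ} (hβ : ∑ i, β i = ∑ i, α₀ i) (T : ℕ) :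
    2 * ∑ t ∈ Finset.range T, s t *
        ∑ i, (subgradientSeq s U α₀ t i - β i) * U (subgradientSeq s U α₀ t) i ≤
      ∑ i, (α₀ i - β i) ^ 2 + m * ∑ t ∈ Finset.range T, s t ^ 2 := by
  suffices ∀ T, ∑ i, (subgradientSeq s U α₀ T i - β i) ^ 2 +
      2 * ∑ t ∈ Finset.range T, s t *
        ∑ i, (subgradientSeq s U α₀ t i - β i) * U (subgradientSeq s U α₀ t) i ≤
      ∑ i, (α₀ i - β i) ^ 2 + m * ∑ t ∈ Finset.range T, s t ^ 2 from
    (le_add_of_nonneg_left (Finset.sum_nonneg fun i _ => sq_nonneg _)).trans (this T)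
  intro T
  induction T with
  | zero => simp [subgradientSeq]
  | succ T ih =>
    have hstep := sum_sq_subgradientStep_sub_le (s T) (fun i => (hU (subgradientSeq s U α₀ T) i).1)
      (fun i => (hU (subgradientSeq s U α₀ T) i).2) ((sum_subgradientSeq s U α₀ T).trans hβ.symm)
    rw [Finset.sum_range_succ, Finset.sum_range_succ]
    simp only [subgradientSeq] at hstep ⊢
    nlinarith

/-- Sum the one-step estimate: `2 ∑ s_t ⟪α_t - β, u_t⟫ ≤ |α₀ - β|² + m ∑ s_t²`, and
`∑ s_t² = o(∑ s_t)`. -/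
lemma hasVanishingRegret_subgradientSeq (hs0 : ∀ t, 0 ≤ s t) (hs : Tendsto s atTop (𝓝 0))
    (hS : Tendsto (fun T => ∑ t ∈ Finset.range T, s t) atTop atTop)
    (hU : ∀ α i, U α i ∈ Set.Icc 0 1) (hα₀ : α₀ ∈ stdSimplex ℝ (Fin m)) :
    HasVanishingRegret s (subgradientSeq s U α₀) (fun t => U (subgradientSeq s U α₀ t)) := by
  intro ε hε
  have hm : (0 : ℝ) < m := Nat.cast_pos.2 (Nat.pos_of_ne_zero (NeZero.ne m))
  obtain ⟨K, hK⟩ := exists_sum_sq_le_add_mul_sum hs0 hs (div_pos hε hm)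
  obtain ⟨T, hT⟩ := (hS.eventually_ge_atTop (max 1 ((m + m * K) / ε))).exists
  refine ⟨T, one_pos.trans_le ((le_max_left _ _).trans hT), fun β hβ => ?_⟩
  have hregret := two_mul_sum_regret_le (s := s) hU (hβ.2.trans hα₀.2.symm) T
  have hdist := sum_sq_sub_le_of_mem_stdSimplex hα₀ hβ
  have hsq := mul_le_mul_of_nonneg_left (hK T) hm.le
  have hlarge : m + m * K ≤ ε * ∑ t ∈ Finset.range T, s t := by
    rw [← div_le_iff₀' hε]; exact (le_max_right _ _).trans hT
  rw [mul_add, ← mul_assoc, mul_div_cancel₀ _ hm.ne'] at hsq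
  linarith

end SubgradientMethod

lemma eventually_setIntegral_le_mul_le {C : Type*} [MeasurableSpace C] {ν : Measure C}
    {g h : C → ℝ} (hg_meas : Measurable g) (hh_meas : Measurable h)
    (hg_nonneg : ∀ x, 0 ≤ g x) (hh_nonneg : ∀ x, 0 ≤ h x) (hg_int : Integrable g ν)
    (hzero : ∫ x in {x | h x = 0}, g x ∂ν = 0) {η : ℝ} (hη : 0 < η) :
    ∀ᶠ d in 𝓝[>] 0, ∫ x in {x | h x ≤ d * g x}, g x ∂ν ≤ η := by
  set W : ℕ → Set C := fun n => {x | h x ≤ (n + 1 : ℝ)⁻¹ * g x}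
  have hW : ∀ n, MeasurableSet (W n) := fun n => measurableSet_le hh_meas (by fun_prop)
  have hW_anti : Antitone W := fun a b hab x hx => hx.trans (mul_le_mul_of_nonneg_right
    (inv_anti₀ (by positivity) (by exact_mod_cast Nat.succ_le_succ hab)) (hg_nonneg x))
  have hW_inter : ∫ x in ⋂ n, W n, g x ∂ν = 0 := by
    refine le_antisymm ?_ (setIntegral_nonneg (.iInter hW) fun x _ => hg_nonneg x)
    refine hzero ▸ setIntegral_mono_set hg_int.integrableOn (Eventually.of_forall hg_nonneg)
      (Eventually.of_forall fun x hx => le_antisymm ?_ (hh_nonneg x))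
    have hlim : Tendsto (fun n : ℕ => (n + 1 : ℝ)⁻¹ * g x) atTop (𝓝 0) := by
      simpa using tendsto_one_div_add_atTop_nhds_zero_nat.mul_const (g x)
    exact ge_of_tendsto hlim (Eventually.of_forall (Set.mem_iInter.1 hx))
  have hlim := tendsto_setIntegral_of_antitone hW hW_anti ⟨0, hg_int.integrableOn⟩
  rw [hW_inter] at hlim
  obtain ⟨n, hn⟩ := (hlim.eventually (gt_mem_nhds hη)).exists
  filter_upwards [Ioo_mem_nhdsGT (show (0 : ℝ) < (n + 1 : ℝ)⁻¹ by positivity)] with d hd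
  refine le_trans (setIntegral_mono_set hg_int.integrableOn (Eventually.of_forall hg_nonneg)
    (Eventually.of_forall fun x hx => ?_)) hn.le
  exact (hx : h x ≤ d * g x).trans (mul_le_mul_of_nonneg_right hd.2.le (hg_nonneg x))

section Maxmin

variable {C : Type*} [MeasurableSpace C] {m : ℕ} {ν : Measure C} {μ : Fin m → Measure C}
  {f : Fin m → C → ℝ}

noncomputable def infSupIntegral (ν : Measure C) (f : Fin m → C → ℝ) : ℝ :=
  sInf {r : ℝ | ∃ α : Fin m → ℝ, (∀ j, 0 ≤ α j) ∧ (∑ j, α j = 1) ∧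
    r = ∫ x, (⨆ j, α j * f j x) ∂ν}

/-- The paper's `v`. -/
noncomputable def maxminValue (μ : Fin m → Measure C) : ℝ :=
  sSup {r : ℝ | ∃ A : Fin m → Set C, (∀ i, MeasurableSet (A i)) ∧
    (∀ i j, i ≠ j → Disjoint (A i) (A j)) ∧ (⋃ i, A i) = Set.univ ∧
    r = ⨅ j, (μ j (A j)).toReal}

lemma exists_maxsum_partition_toReal_eq [NeZero m] (hf_meas : ∀ j, Measurable (f j))
    (hdens : ∀ j (A : Set C), MeasurableSet A → (μ j A).toReal = ∫ x in A, f j x ∂ν)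
    (α : Fin m → ℝ) :
    ∃ B : Fin m → Set C, (∀ i, MeasurableSet (B i)) ∧ (∀ i j, i ≠ j → Disjoint (B i) (B j)) ∧
      (⋃ i, B i) = Set.univ ∧ (∀ k, ∀ᵐ x ∂ν, x ∈ B k → ∀ h, α h * f h x ≤ α k * f k x) ∧
      partValue ν f α = fun j => (μ j (B j)).toReal := by
  have hP := isMeasurablePartition_maxsumPart hf_meas α
  exact ⟨maxsumPart f α, hP.measurableSet, fun i j hij => hP.pairwise_disjoint hij, hP.iUnion_eq,
    fun k => .of_forall fun x hx h => mul_le_of_mem_maxsumPart hx h,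
    funext fun j => (hdens j _ (hP.measurableSet j)).symm⟩

lemma integral_eq_one_of_toReal_eq [∀ j, IsProbabilityMeasure (μ j)]
    (hdens : ∀ j (A : Set C), MeasurableSet A → (μ j A).toReal = ∫ x in A, f j x ∂ν)
    (j : Fin m) : ∫ x, f j x ∂ν = 1 := by
  simpa using (hdens j Set.univ .univ).symm

lemma toReal_sum_apply_eq_setIntegral
    (hf_int : ∀ j, Integrable (f j) ν)
    (hdens : ∀ j (A : Set C), MeasurableSet A → (μ j A).toReal = ∫ x in A, f j x ∂ν)
    [∀ j, IsFiniteMeasure (μ j)] {A : Set C} (hA : MeasurableSet A) :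
    ((∑ j, μ j) A).toReal = ∫ x in A, ∑ j, f j x ∂ν := by
  rw [Measure.finsetSum_apply, ENNReal.toReal_sum fun j _ => measure_ne_top _ _,
    integral_finsetSum _ fun j _ => (hf_int j).integrableOn]
  exact Finset.sum_congr rfl fun j _ => hdens j A hA

lemma partValue_eq_toReal [NeZero m] (hf_meas : ∀ j, Measurable (f j))
    (hdens : ∀ j (A : Set C), MeasurableSet A → (μ j A).toReal = ∫ x in A, f j x ∂ν)
    (α : Fin m → ℝ) (j : Fin m) : partValue ν f α j = (μ j (maxsumPart f α j)).toReal :=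
  (hdens j _ ((isMeasurablePartition_maxsumPart hf_meas α).measurableSet j)).symm

lemma partValue_mem_Icc [NeZero m] [∀ j, IsProbabilityMeasure (μ j)]
    (hf_meas : ∀ j, Measurable (f j))
    (hdens : ∀ j (A : Set C), MeasurableSet A → (μ j A).toReal = ∫ x in A, f j x ∂ν)
    (α : Fin m → ℝ) (j : Fin m) : partValue ν f α j ∈ Set.Icc 0 1 := by
  rw [partValue_eq_toReal hf_meas hdens]
  exact ⟨ENNReal.toReal_nonneg, ENNReal.toReal_le_of_le_ofReal zero_le_one (by simp [prob_le_one])⟩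

lemma inv_le_sum_partValue [NeZero m] [∀ j, IsProbabilityMeasure (μ j)]
    (hf_meas : ∀ j, Measurable (f j)) (hf_int : ∀ j, Integrable (f j) ν)
    (hdens : ∀ j (A : Set C), MeasurableSet A → (μ j A).toReal = ∫ x in A, f j x ∂ν)
    {α : Fin m → ℝ} (hα : α ∈ stdSimplex ℝ (Fin m)) :
    (m : ℝ)⁻¹ ≤ ∑ k, partValue ν f α k := by
  obtain ⟨k, -, hk⟩ := Finset.exists_le_of_sum_le Finset.univ_nonempty
    (show ∑ _k : Fin m, (m : ℝ)⁻¹ ≤ ∑ k, α k by simp [hα.2])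
  calc (m : ℝ)⁻¹ ≤ α k * ∫ x, f k x ∂ν := by
        rw [integral_eq_one_of_toReal_eq hdens, mul_one]; exact hk
    _ ≤ supIntegral ν f α := mul_integral_le_supIntegral hf_meas hf_int α k
    _ = ∑ k, α k * partValue ν f α k := supIntegral_eq_sum_mul_partValue hf_meas hf_int α
    _ ≤ ∑ k, partValue ν f α k := Finset.sum_le_sum fun i _ =>
        mul_le_of_le_one_left (partValue_mem_Icc hf_meas hdens α i).1
          (mem_Icc_of_mem_stdSimplex hα i).2

lemma partValue_le_setIntegral [NeZero m] (hf_nonneg : ∀ j x, 0 ≤ f j x)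
    (hf_int : ∀ j, Integrable (f j) ν)
    {α : Fin m → ℝ} (hα : α ∈ stdSimplex ℝ (Fin m)) {j : Fin m} (hj : α j < (m : ℝ)⁻¹) {d : ℝ}
    (hd : m * α j ≤ d) :
    ∃ k ≠ j, partValue ν f α j ≤ ∫ x in {x | f k x ≤ d * f j x}, f j x ∂ν := by
  obtain ⟨k, -, hk⟩ := Finset.exists_le_of_sum_le Finset.univ_nonempty
    (show ∑ _k : Fin m, (m : ℝ)⁻¹ ≤ ∑ k, α k by simp [hα.2])
  have hm : (0 : ℝ) < m := Nat.cast_pos.2 (Nat.pos_of_ne_zero (NeZero.ne m))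
  refine ⟨k, fun h => (h ▸ hj).not_ge hk, setIntegral_mono_set (hf_int j).integrableOn
    (Eventually.of_forall (hf_nonneg j)) (Eventually.of_forall fun x hx => ?_)⟩
  show f k x ≤ d * f j x
  calc f k x = m * ((m : ℝ)⁻¹ * f k x) := by field_simp
    _ ≤ m * (α j * f j x) := mul_le_mul_of_nonneg_left
        ((mul_le_mul_of_nonneg_right hk (hf_nonneg k x)).trans (mul_le_of_mem_maxsumPart hx k))
        hm.le
    _ ≤ d * f j x := by rw [← mul_assoc]; exact mul_le_mul_of_nonneg_right hd (hf_nonneg j x)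

lemma setIntegral_eq_zero_of_mac (hf_meas : ∀ j, Measurable (f j))
    (hdens : ∀ j (A : Set C), MeasurableSet A → (μ j A).toReal = ∫ x in A, f j x ∂ν)
    [∀ j, IsFiniteMeasure (μ j)]
    (hmac : ∀ j k (A : Set C), MeasurableSet A → 0 < μ j A → 0 < μ k A) (j k : Fin m) :
    ∫ x in {x | f k x = 0}, f j x ∂ν = 0 := by
  have hZ : MeasurableSet {x | f k x = 0} := hf_meas k (measurableSet_singleton 0)
  have hk : μ k {x | f k x = 0} = 0 := by
    refine ((ENNReal.toReal_eq_zero_iff _).1 ?_).resolve_right (measure_ne_top _ _)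
    rw [hdens k _ hZ]
    exact setIntegral_eq_zero_of_forall_eq_zero fun x hx => hx
  have hj : μ j {x | f k x = 0} = 0 := by
    by_contra h
    exact (hmac j k _ hZ (pos_iff_ne_zero.2 h)).ne' hk
  rw [← hdens j _ hZ, hj, ENNReal.toReal_zero]

/-- On the part of a coordinate `j` with `α j ≤ 2δ`, some `f_k` is at most `2δm f_j`; by (MAC)
such sets carry little `μ_j`-mass once `δ` is small. -/
lemma exists_pos_partValue_le_average [NeZero m] [∀ j, IsProbabilityMeasure (μ j)]
    (hf_meas : ∀ j, Measurable (f j)) (hf_nonneg : ∀ j x, 0 ≤ f j x)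
    (hf_int : ∀ j, Integrable (f j) ν)
    (hdens : ∀ j (A : Set C), MeasurableSet A → (μ j A).toReal = ∫ x in A, f j x ∂ν)
    (hmac : ∀ j k (A : Set C), MeasurableSet A → 0 < μ j A → 0 < μ k A) :
    ∃ δ > 0, ∀ α ∈ stdSimplex ℝ (Fin m), ∀ j, α j ≤ 2 * δ →
      partValue ν f α j ≤ (∑ k, partValue ν f α k) / m := by
  have hm : (0 : ℝ) < m := Nat.cast_pos.2 (Nat.pos_of_ne_zero (NeZero.ne m))
  have hev : ∀ᶠ d in 𝓝[>] 0, ∀ j k, j ≠ k →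
      ∫ x in {x | f k x ≤ d * f j x}, f j x ∂ν ≤ ((m : ℝ) ^ 2)⁻¹ :=
    eventually_all.2 fun j => eventually_all.2 fun k =>
      (eventually_setIntegral_le_mul_le (hf_meas j) (hf_meas k) (hf_nonneg j) (hf_nonneg k)
        (hf_int j) (setIntegral_eq_zero_of_mac hf_meas hdens hmac j k) (by positivity)).mono
        fun _ hd _ => hd
  obtain ⟨d, hd, hd0 : 0 < d⟩ := (hev.and self_mem_nhdsWithin).exists
  refine ⟨min (d / (2 * m)) (4 * m)⁻¹, lt_min (by positivity) (by positivity), fun α hα j hj => ?_⟩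
  have hjm : α j < (m : ℝ)⁻¹ :=
    (hj.trans (mul_le_mul_of_nonneg_left (min_le_right _ _) zero_le_two)).trans_lt
      (by field_simp; linarith)
  have hjd : m * α j ≤ d := by
    have := hj.trans (mul_le_mul_of_nonneg_left (min_le_left _ _) zero_le_two)
    field_simp at this
    linarith
  obtain ⟨k, hkj, hle⟩ := partValue_le_setIntegral hf_nonneg hf_int hα hjm hjd
  calc partValue ν f α j ≤ ((m : ℝ) ^ 2)⁻¹ := hle.trans (hd j k hkj.symm)
    _ = (m : ℝ)⁻¹ / m := by rw [sq, mul_inv, div_eq_mul_inv]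
    _ ≤ (∑ k, partValue ν f α k) / m :=
        div_le_div_of_nonneg_right (inv_le_sum_partValue hf_meas hf_int hdens hα) hm.le

end Maxmin

section Duality

variable {C : Type*} [MeasurableSpace C] {m : ℕ} [NeZero m] {ν : Measure C}
  {μ : Fin m → Measure C} {f : Fin m → C → ℝ}

lemma sum_sub_mul_partValue (hf_meas : ∀ j, Measurable (f j)) (hf_int : ∀ j, Integrable (f j) ν)
    (α β : Fin m → ℝ) :
    ∑ i, (α i - β i) * partValue ν f α i = supIntegral ν f α - ∑ i, β i * partValue ν f α i := by
  rw [supIntegral_eq_sum_mul_partValue hf_meas hf_int, ← Finset.sum_sub_distrib]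
  exact Finset.sum_congr rfl fun i _ => sub_mul _ _ _

lemma bddBelow_supIntegral (hf_nonneg : ∀ j x, 0 ≤ f j x) :
    BddBelow {r : ℝ | ∃ α : Fin m → ℝ, (∀ j, 0 ≤ α j) ∧ (∑ j, α j = 1) ∧
      r = ∫ x, (⨆ j, α j * f j x) ∂ν} := by
  refine ⟨0, ?_⟩
  rintro r ⟨β, hβ, -, rfl⟩
  exact integral_nonneg fun x => le_ciSup_of_le (Finite.bddAbove_range _) 0
    (mul_nonneg (hβ 0) (hf_nonneg 0 x))

lemma infSupIntegral_le_supIntegral (hf_nonneg : ∀ j x, 0 ≤ f j x) {α : Fin m → ℝ}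
    (hα : α ∈ stdSimplex ℝ (Fin m)) : infSupIntegral ν f ≤ supIntegral ν f α :=
  csInf_le (bddBelow_supIntegral hf_nonneg) ⟨α, hα.1, hα.2, rfl⟩

lemma exists_supIntegral_lt (hf_nonneg : ∀ j x, 0 ≤ f j x) {ε : ℝ} (hε : 0 < ε) :
    ∃ β ∈ stdSimplex ℝ (Fin m), supIntegral ν f β < infSupIntegral ν f + ε := by
  obtain ⟨_, ⟨β, hβ0, hβ1, rfl⟩, hβ⟩ := (csInf_lt_iff (bddBelow_supIntegral hf_nonneg)
    ⟨_, Pi.single 0 1, (single_mem_stdSimplex ℝ 0).1, (single_mem_stdSimplex ℝ 0).2, rfl⟩).1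
      (lt_add_of_pos_right (infSupIntegral ν f) hε)
  exact ⟨β, ⟨hβ0, hβ1⟩, hβ⟩

lemma iInf_toReal_le_supIntegral (hf_meas : ∀ j, Measurable (f j))
    (hf_int : ∀ j, Integrable (f j) ν)
    (hdens : ∀ j (A : Set C), MeasurableSet A → (μ j A).toReal = ∫ x in A, f j x ∂ν)
    {A : Fin m → Set C} (hA : IsMeasurablePartition A Set.univ) {β : Fin m → ℝ}
    (hβ : β ∈ stdSimplex ℝ (Fin m)) : ⨅ j, (μ j (A j)).toReal ≤ supIntegral ν f β :=
  calc ⨅ j, (μ j (A j)).toReal = ∑ k, β k * ⨅ j, (μ j (A j)).toReal := by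
        rw [← Finset.sum_mul, hβ.2, one_mul]
    _ ≤ ∑ k, β k * ∫ x in A k, f k x ∂ν := Finset.sum_le_sum fun k _ =>
        mul_le_mul_of_nonneg_left ((ciInf_le (Finite.bddBelow_range _) k).trans_eq
          (hdens k _ (hA.measurableSet k))) (hβ.1 k)
    _ ≤ supIntegral ν f β := sum_mul_setIntegral_le_supIntegral hf_meas hf_int hA β

lemma maxminValue_le_infSupIntegral (hf_meas : ∀ j, Measurable (f j))
    (hf_int : ∀ j, Integrable (f j) ν)
    (hdens : ∀ j (A : Set C), MeasurableSet A → (μ j A).toReal = ∫ x in A, f j x ∂ν) :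
    maxminValue μ ≤ infSupIntegral ν f := by
  have hP := isMeasurablePartition_maxsumPart hf_meas 0
  refine csSup_le ⟨_, maxsumPart f 0, hP.measurableSet, fun i j hij => hP.pairwise_disjoint hij,
    hP.iUnion_eq, rfl⟩ ?_
  rintro r ⟨A, hAm, hAd, hAu, rfl⟩
  refine le_csInf ⟨_, Pi.single 0 1, (single_mem_stdSimplex ℝ 0).1,
    (single_mem_stdSimplex ℝ 0).2, rfl⟩ ?_
  rintro r ⟨β, hβ0, hβ1, rfl⟩
  exact iInf_toReal_le_supIntegral hf_meas hf_int hdens ⟨hAm, fun i j hij => hAd i j hij, hAu⟩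
    ⟨hβ0, hβ1⟩

variable {s : ℕ → ℝ} {α : ℕ → Fin m → ℝ}

lemma exists_supIntegral_lt_infSupIntegral_add (hf_meas : ∀ j, Measurable (f j))
    (hf_nonneg : ∀ j x, 0 ≤ f j x) (hf_int : ∀ j, Integrable (f j) ν) (hs0 : ∀ t, 0 ≤ s t)
    (hregret : HasVanishingRegret s α fun t => partValue ν f (α t)) {ε : ℝ} (hε : 0 < ε) :
    ∃ t, supIntegral ν f (α t) < infSupIntegral ν f + ε := by
  by_contra! hfar
  obtain ⟨β, hβ, hβlt⟩ := exists_supIntegral_lt (ν := ν) hf_nonneg (half_pos hε)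
  obtain ⟨T, hS, hT⟩ := hregret (ε / 4) (by positivity)
  have hgap : ∀ t, ε / 2 ≤ ∑ i, (α t i - β i) * partValue ν f (α t) i := fun t => by
    have hβu : ∑ i, β i * partValue ν f (α t) i ≤ supIntegral ν f β :=
      sum_mul_setIntegral_le_supIntegral hf_meas hf_int
        (isMeasurablePartition_maxsumPart hf_meas (α t)) β
    rw [sum_sub_mul_partValue hf_meas hf_int]
    linarith [hfar t]
  have := Finset.sum_le_sum fun t (_ : t ∈ Finset.range T) =>
    mul_le_mul_of_nonneg_left (hgap t) (hs0 t)
  rw [← Finset.sum_mul] at this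
  nlinarith [hT β hβ]

/-- This is the regret bound against the vertex `β = e_k`. -/
lemma sub_le_sum_div_mul_partValue (hf_meas : ∀ j, Measurable (f j))
    (hf_nonneg : ∀ j x, 0 ≤ f j x) (hf_int : ∀ j, Integrable (f j) ν) (hs0 : ∀ t, 0 ≤ s t)
    (hα : ∀ t, α t ∈ stdSimplex ℝ (Fin m)) {ε : ℝ} {T : ℕ}
    (hS : 0 < ∑ t ∈ Finset.range T, s t)
    (hT : ∀ β ∈ stdSimplex ℝ (Fin m), ∑ t ∈ Finset.range T, s t *
      ∑ i, (α t i - β i) * partValue ν f (α t) i ≤ ε * ∑ t ∈ Finset.range T, s t) (k : Fin m) :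
    infSupIntegral ν f - ε ≤
      ∑ t ∈ Finset.range T, s t / (∑ t ∈ Finset.range T, s t) * partValue ν f (α t) k := by
  have hvertex := hT (Pi.single k 1) (single_mem_stdSimplex ℝ k)
  simp only [sum_sub_mul_partValue hf_meas hf_int, Pi.single_apply, ite_mul, one_mul, zero_mul,
    Finset.sum_ite_eq', Finset.mem_univ, if_true] at hvertex
  have hinf := Finset.sum_le_sum fun t (_ : t ∈ Finset.range T) => mul_le_mul_of_nonneg_left
    (infSupIntegral_le_supIntegral (ν := ν) hf_nonneg (hα t)) (hs0 t)
  simp_rw [div_mul_eq_mul_div, ← Finset.sum_div, mul_sub, Finset.sum_sub_distrib] at hvertex ⊢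
  rw [le_div_iff₀ hS]
  rw [← Finset.sum_mul] at hinf
  linarith

/-- Each `μ_k` receives on `s`-average almost `inf g` from the maxsum partitions of the
iterates; mix these partitions. -/
lemma infSupIntegral_le_maxminValue [∀ j, IsProbabilityMeasure (μ j)]
    (hf_meas : ∀ j, Measurable (f j)) (hf_nonneg : ∀ j x, 0 ≤ f j x)
    (hf_int : ∀ j, Integrable (f j) ν)
    (hdens : ∀ j (A : Set C), MeasurableSet A → (μ j A).toReal = ∫ x in A, f j x ∂ν)
    (hna : ∀ j, (μ j).IsNonatomic) (hs0 : ∀ t, 0 ≤ s t) (hα : ∀ t, α t ∈ stdSimplex ℝ (Fin m))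
    (hregret : HasVanishingRegret s α fun t => partValue ν f (α t)) :
    infSupIntegral ν f ≤ maxminValue μ := by
  refine le_of_forall_pos_le_add fun ε hε => ?_
  obtain ⟨T, hS, hT⟩ := hregret (ε / 2) (half_pos hε)
  obtain ⟨N, hN⟩ := exists_nat_gt ((m : ℝ) / (ε / 2))
  have hN0 : 0 < N := Nat.cast_pos.1 ((by positivity : (0 : ℝ) ≤ _).trans_lt hN)
  obtain ⟨A, hA, hAge⟩ := exists_partition_sum_mul_setIntegral_sub_le hf_meas hf_nonneg hf_int
    (Measure.IsNonatomic.finsetSum _ fun j _ => hna j)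
    (fun _ hA => toReal_sum_apply_eq_setIntegral hf_int hdens hA)
    (P := fun t : Finset.range T => maxsumPart f (α t))
    (fun t => isMeasurablePartition_maxsumPart hf_meas _)
    (p := fun t => s t / ∑ t ∈ Finset.range T, s t) (fun t => div_nonneg (hs0 t) hS.le)
    (by rw [Finset.sum_coe_sort (Finset.range T) (fun t => s t / _), ← Finset.sum_div,
      div_self hS.ne']) hN0
  have hF : ∫ x, ∑ i, f i x ∂ν = m := by
    simp [integral_finsetSum _ fun i _ => hf_int i, integral_eq_one_of_toReal_eq hdens]
  have hNm : (N : ℝ)⁻¹ * m ≤ ε / 2 := by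
    rw [inv_mul_le_iff₀ (by positivity)]
    rw [div_lt_iff₀ (half_pos hε)] at hN
    linarith
  have hworst : infSupIntegral ν f - ε ≤ ⨅ j, (μ j (A j)).toReal := by
    refine le_ciInf fun k => ?_
    have havg := sub_le_sum_div_mul_partValue hf_meas hf_nonneg hf_int hs0 hα hS hT k
    have hmix : ∑ t ∈ Finset.range T, s t / (∑ t ∈ Finset.range T, s t) * partValue ν f (α t) k -
        (N : ℝ)⁻¹ * ∫ x, ∑ i, f i x ∂ν ≤ ∫ x in A k, f k x ∂ν := by
      rw [← Finset.sum_coe_sort]; exact hAge k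
    rw [hF] at hmix
    rw [hdens k _ (hA.measurableSet k)]
    linarith
  calc infSupIntegral ν f ≤ (⨅ j, (μ j (A j)).toReal) + ε := by linarith
    _ ≤ maxminValue μ + ε := by
        gcongr ?_ + _
        refine le_csSup ⟨1, ?_⟩ ⟨A, hA.measurableSet, fun i j hij => hA.pairwise_disjoint hij,
          hA.iUnion_eq, rfl⟩
        rintro r ⟨B, -, -, -, rfl⟩
        exact (ciInf_le (Finite.bddBelow_range _) 0).trans
          (ENNReal.toReal_le_of_le_ofReal zero_le_one (by simp [prob_le_one]))

end Duality

theorem subgradient_method_converges_general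
    {C : Type} [MeasurableSpace C] {m : ℕ}
    (ν : Measure C)
    (μ : Fin m → Measure C) [∀ j, IsProbabilityMeasure (μ j)]
    (f : Fin m → C → ℝ)
    (hf_meas : ∀ j, Measurable (f j))
    (hf_nonneg : ∀ j x, 0 ≤ f j x)
    (hf_int : ∀ j, Integrable (f j) ν)
    (hdens : ∀ j (A : Set C), MeasurableSet A → (μ j A).toReal = ∫ x in A, f j x ∂ν)
    (hna : ∀ j (A : Set C), MeasurableSet A → 0 < μ j A →
      ∃ B, MeasurableSet B ∧ B ⊆ A ∧ 0 < μ j B ∧ 0 < μ j (A \ B))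
    (hmac : ∀ j k (A : Set C), MeasurableSet A → 0 < μ j A → 0 < μ k A)
    (s : ℕ → ℝ) (hs_pos : ∀ t, 0 < s t)
    (hs_lim : Tendsto s atTop (𝓝 0))
    (hs_div : Tendsto (fun n => ∑ t ∈ Finset.range n, s t) atTop atTop)
    (α0 : Fin m → ℝ) (hα0_pos : ∀ j, 0 < α0 j) (hα0_sum : ∑ j, α0 j = 1) :
    ∃ (s' : ℕ → ℝ) (αs : ℕ → Fin m → ℝ) (u : ℕ → Fin m → ℝ),
      (∀ t, 0 < s' t ∧ s' t ≤ s t) ∧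
      Tendsto s' atTop (𝓝 0) ∧
      Tendsto (fun n => ∑ t ∈ Finset.range n, s' t) atTop atTop ∧
      αs 0 = α0 ∧
      (∀ t, (∀ j, 0 < αs t j) ∧ ∑ j, αs t j = 1) ∧
      (∀ t, ∃ B : Fin m → Set C,
        (∀ i, MeasurableSet (B i)) ∧
        (∀ i j, i ≠ j → Disjoint (B i) (B j)) ∧
        (⋃ i, B i) = Set.univ ∧
        (∀ k, ∀ᵐ x ∂ν, x ∈ B k → ∀ h, αs t h * f h x ≤ αs t k * f k x) ∧
        u t = fun j => (μ j (B j)).toReal) ∧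
      (∀ t i, αs (t + 1) i = αs t i - s' t * (u t i - (∑ j, u t j) / (m : ℝ))) ∧
      Tendsto (fun t => ⨅ i : Fin (t + 1), ∫ x, (⨆ j, αs i j * f j x) ∂ν) atTop
        (𝓝 (sInf {r : ℝ | ∃ α : Fin m → ℝ, (∀ j, 0 ≤ α j) ∧ (∑ j, α j = 1) ∧
            r = ∫ x, (⨆ j, α j * f j x) ∂ν})) ∧
      sInf {r : ℝ | ∃ α : Fin m → ℝ, (∀ j, 0 ≤ α j) ∧ (∑ j, α j = 1) ∧
            r = ∫ x, (⨆ j, α j * f j x) ∂ν} =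
        sSup {r : ℝ | ∃ A : Fin m → Set C, (∀ i, MeasurableSet (A i)) ∧
            (∀ i j, i ≠ j → Disjoint (A i) (A j)) ∧ (⋃ i, A i) = Set.univ ∧
            r = ⨅ j, (μ j (A j)).toReal} := by
  have : NeZero m := ⟨by rintro rfl; simp at hα0_sum⟩
  have hU := partValue_mem_Icc (μ := μ) hf_meas hdens
  obtain ⟨δ, hδ, hsmall⟩ := exists_pos_partValue_le_average hf_meas hf_nonneg hf_int hdens hmac
  obtain ⟨s', hs', hs'δ, hs'_lim, hs'_div⟩ := exists_steps_le_min hs_pos hs_lim hs_div hδ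
  set αs := subgradientSeq s' (partValue ν f) α0
  obtain ⟨ρ, hρ, hαs_ge⟩ := exists_pos_le_subgradientSeq hδ (fun t => (hs' t).1.le) hs'δ hU
    hsmall hα0_pos hα0_sum
  have hαs : ∀ t, αs t ∈ stdSimplex ℝ (Fin m) := fun t =>
    ⟨fun j => hρ.le.trans (hαs_ge t j), (sum_subgradientSeq _ _ _ t).trans hα0_sum⟩
  have hregret := hasVanishingRegret_subgradientSeq (fun t => (hs' t).1.le) hs'_lim hs'_div hU
    ⟨fun j => (hα0_pos j).le, hα0_sum⟩
  exact ⟨s', αs, fun t => partValue ν f (αs t), hs', hs'_lim, hs'_div, rfl,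
    fun t => ⟨fun j => hρ.trans_le (hαs_ge t j), (hαs t).2⟩,
    fun t => exists_maxsum_partition_toReal_eq hf_meas hdens (αs t), fun t i => rfl,
    tendsto_iInf_fin_succ_of_forall_le (a := fun t => supIntegral ν f (αs t))
      (fun t => infSupIntegral_le_supIntegral hf_nonneg (hαs t))
      fun ε hε => exists_supIntegral_lt_infSupIntegral_add hf_meas hf_nonneg hf_int
        (fun t => (hs' t).1.le) hregret hε,
    le_antisymm (infSupIntegral_le_maxminValue hf_meas hf_nonneg hf_int hdens hna
      (fun t => (hs' t).1.le) hαs hregret) (maxminValue_le_infSupIntegral hf_meas hf_int hdens)⟩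

/-- Convergence of the subgradient recursion on the simplex.
Under (CD) (nonatomicity) and (MAC), starting from any `α⁰` in the relative
interior of the simplex and any diminishing step size rule `s`, there exist a
smaller diminishing step size rule `s'`, a sequence `αˢ` in the relative interior
of the simplex and a sequence `u` of partition value vectors of maxsum partitions
for the `αˢ t`, following the subgradient update rule, such that
`min_{i ≤ t} g(αˢ i) → inf_{α ∈ Δ} g(α) = v`, the maxmin value. -/
theorem subgradient_method_converges
    {C : Type} [MeasurableSpace C] {m : ℕ} (hm : 2 ≤ m)
    (ν : Measure C) [IsFiniteMeasure ν]
    (μ : Fin m → Measure C) [∀ j, IsProbabilityMeasure (μ j)]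
    (f : Fin m → C → ℝ)
    (hf_meas : ∀ j, Measurable (f j))
    (hf_nonneg : ∀ j x, 0 ≤ f j x)
    (hf_int : ∀ j, Integrable (f j) ν)
    (hdens : ∀ j (A : Set C), MeasurableSet A → (μ j A).toReal = ∫ x in A, f j x ∂ν)
    (hna : ∀ j (A : Set C), MeasurableSet A → 0 < μ j A →
      ∃ B, MeasurableSet B ∧ B ⊆ A ∧ 0 < μ j B ∧ 0 < μ j (A \ B))
    (hmac : ∀ j k (A : Set C), MeasurableSet A → 0 < μ j A → 0 < μ k A)
    (s : ℕ → ℝ) (hs_pos : ∀ t, 0 < s t)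
    (hs_lim : Tendsto s atTop (𝓝 0))
    (hs_div : Tendsto (fun n => ∑ t ∈ Finset.range n, s t) atTop atTop)
    (α0 : Fin m → ℝ) (hα0_pos : ∀ j, 0 < α0 j) (hα0_sum : ∑ j, α0 j = 1) :
    ∃ (s' : ℕ → ℝ) (αs : ℕ → Fin m → ℝ) (u : ℕ → Fin m → ℝ),
      (∀ t, 0 < s' t ∧ s' t ≤ s t) ∧
      Tendsto s' atTop (𝓝 0) ∧
      Tendsto (fun n => ∑ t ∈ Finset.range n, s' t) atTop atTop ∧
      αs 0 = α0 ∧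
      (∀ t, (∀ j, 0 < αs t j) ∧ ∑ j, αs t j = 1) ∧
      (∀ t, ∃ B : Fin m → Set C,
        (∀ i, MeasurableSet (B i)) ∧
        (∀ i j, i ≠ j → Disjoint (B i) (B j)) ∧
        (⋃ i, B i) = Set.univ ∧
        (∀ k, ∀ᵐ x ∂ν, x ∈ B k → ∀ h, αs t h * f h x ≤ αs t k * f k x) ∧
        u t = fun j => (μ j (B j)).toReal) ∧
      (∀ t i, αs (t + 1) i = αs t i - s' t * (u t i - (∑ j, u t j) / (m : ℝ))) ∧
      Tendsto (fun t => ⨅ i : Fin (t + 1), ∫ x, (⨆ j, αs i j * f j x) ∂ν) atTop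
        (𝓝 (sInf {r : ℝ | ∃ α : Fin m → ℝ, (∀ j, 0 ≤ α j) ∧ (∑ j, α j = 1) ∧
            r = ∫ x, (⨆ j, α j * f j x) ∂ν})) ∧
      sInf {r : ℝ | ∃ α : Fin m → ℝ, (∀ j, 0 ≤ α j) ∧ (∑ j, α j = 1) ∧
            r = ∫ x, (⨆ j, α j * f j x) ∂ν} =
        sSup {r : ℝ | ∃ A : Fin m → Set C, (∀ i, MeasurableSet (A i)) ∧
            (∀ i j, i ≠ j → Disjoint (A i) (A j)) ∧ (⋃ i, A i) = Set.univ ∧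
            r = ⨅ j, (μ j (A j)).toReal} :=
  subgradient_method_converges_general ν μ f hf_meas hf_nonneg hf_int hdens hna hmac s hs_pos hs_lim
    hs_div α0 hα0_pos hα0_sum
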